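/- For every nonnegative integer N, the following holds in ℤ[q]: if N is even, say N = 2M, then ∑_{π ∈ D_{≤N}} (−1)^{O(π)} q^{E(π)} = ∏_{i=0}^{M−1} (1 + q^{2i+1}); if N is odd, then ∑_{π ∈ D_{≤N}} (−1)^{O(π)} q^{E(π)} = 0. Here the sum runs over the (finitely many) partitions into distinct parts all ≤ N. -/

import Mathlib

/-- Sum of `f` over the entries of a list at even 0-based positions, i.e. over the
odd-indexed parts `λ1, λ3, λ5, …` of a partition `(λ1, λ2, λ3, …)`. -/
def sumAlt (f : ℕ → ℕ) : List ℕ → ℕ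
  | [] => 0
  | [a] => f a
  | a :: _ :: l => f a + sumAlt f l

/-- `O(π) = λ1 + λ3 + λ5 + ⋯`, the sum of the odd-indexed parts. -/
def Osum (l : List ℕ) : ℕ := sumAlt id l

/-- `E(π) = λ2 + λ4 + λ6 + ⋯`, the sum of the even-indexed parts. -/
def Esum (l : List ℕ) : ℕ := sumAlt id l.tail

/-- `γ(π) = λ1 − λ2 + λ3 − λ4 + ⋯ = O(π) − E(π)`, the alternating sum of the parts.
For a weakly decreasing list we have `Osum l ≥ Esum l`, so natural subtraction is exact. -/
def gammaSum (l : List ℕ) : ℕ := Osum l - Esum l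

/-- `⌈O⌉(π) = ∑ ⌈λ_{2i−1}/2⌉`. -/
def ceilO (l : List ℕ) : ℕ := sumAlt (fun a => (a + 1) / 2) l

/-- `⌊O⌋(π) = ∑ ⌊λ_{2i−1}/2⌋`. -/
def floorO (l : List ℕ) : ℕ := sumAlt (fun a => a / 2) l

/-- `⌈E⌉(π) = ∑ ⌈λ_{2i}/2⌉`. -/
def ceilE (l : List ℕ) : ℕ := sumAlt (fun a => (a + 1) / 2) l.tail

/-- `⌊E⌋(π) = ∑ ⌊λ_{2i}/2⌋`. -/
def floorE (l : List ℕ) : ℕ := sumAlt (fun a => a / 2) l.tail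

/-- A partition: a weakly decreasing finite list of positive integers. -/
def IsPartition (l : List ℕ) : Prop := l.Pairwise (· ≥ ·) ∧ ∀ x ∈ l, 0 < x

/-- A partition into distinct parts: a strictly decreasing finite list of positive integers. -/
def IsDistinctPartition (l : List ℕ) : Prop := l.Pairwise (· > ·) ∧ ∀ x ∈ l, 0 < x

/-- The Gaussian binomial coefficient `[n choose k]_q` as a polynomial in `q`
(defined by the q-Pascal recurrence; it equals `(q;q)_n / ((q;q)_k (q;q)_{n−k})`). -/
noncomputable def qbinom : ℕ → ℕ → Polynomial ℤ
  | _, 0 => 1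
  | 0, _ + 1 => 0
  | n + 1, k + 1 => qbinom n k + Polynomial.X ^ (k + 1) * qbinom n (k + 1)

/-!
Let `F_N(x, y) = ∑_{π ∈ D_{≤N}} x^{O(π)} y^{E(π)}`. A partition in `D_{≤N+1}` either avoids
`N + 1` or is `N + 1` prepended to a partition in `D_{≤N}`, and prepending a part swaps the
odd- and even-indexed parts, so `F_{N+1}(x, y) = F_N(x, y) + x^{N+1} F_N(y, x)`. Applying this
twice with `x = -1` and `N` even, the term involving `F_N(y, -1)` carries the factor
`1 + x = 0`, which gives `F_{N+2}(-1, y) = (1 + y^{N+1}) F_N(-1, y)`. The odd case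
`F_{2M+1}(-1, y) = F_{2M}(-1, y) - F_{2M}(y, -1)` vanishes because a simultaneous induction
shows that both terms equal `∏_{i<M} (1 + y^{2i+1})`.
-/

open Polynomial Finset

def distinctPartsLE : ℕ → Finset (List ℕ)
  | 0 => {[]}
  | N + 1 => distinctPartsLE N ∪ (distinctPartsLE N).image ((N + 1) :: ·)

lemma isDistinctPartition_cons {a : ℕ} {l : List ℕ} :
    IsDistinctPartition (a :: l) ↔ (∀ x ∈ l, x < a) ∧ 0 < a ∧ IsDistinctPartition l := by
  simp only [IsDistinctPartition, List.pairwise_cons, List.forall_mem_cons, gt_iff_lt]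
  tauto

lemma mem_distinctPartsLE {N : ℕ} {l : List ℕ} :
    l ∈ distinctPartsLE N ↔ IsDistinctPartition l ∧ ∀ x ∈ l, x ≤ N := by
  induction N generalizing l with
  | zero =>
    cases l with
    | nil => simp [distinctPartsLE, IsDistinctPartition]
    | cons a l => simp [distinctPartsLE, isDistinctPartition_cons]; omega
  | succ N ih =>
    cases l with
    | nil => simp [distinctPartsLE, ih, IsDistinctPartition]
    | cons a l =>
      simp only [distinctPartsLE, mem_union, mem_image, List.cons.injEq, ih,
        isDistinctPartition_cons, List.forall_mem_cons, exists_eq_right_right]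
      constructor
      · rintro (⟨hal, haN, hlN⟩ | ⟨⟨hl, hlN⟩, rfl⟩)
        · exact ⟨hal, by omega, fun x hx => (hlN x hx).trans N.le_succ⟩
        · exact ⟨⟨fun x hx => Nat.lt_succ_of_le (hlN x hx), by omega, hl⟩, le_rfl,
            fun x hx => (hlN x hx).trans N.le_succ⟩
      · rintro ⟨⟨hlt, ha, hl⟩, haN, -⟩
        rcases haN.lt_or_eq with haN | rfl
        · exact .inl ⟨⟨hlt, ha, hl⟩, by omega, fun x hx => by have := hlt x hx; omega⟩
        · exact .inr ⟨⟨hl, fun x hx => Nat.le_of_lt_succ (hlt x hx)⟩, rfl⟩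

lemma Osum_cons (a : ℕ) (l : List ℕ) : Osum (a :: l) = a + Esum l := by
  cases l <;> simp [Osum, Esum, sumAlt]

lemma Esum_cons (a : ℕ) (l : List ℕ) : Esum (a :: l) = Osum l := rfl

section CommSemiring

variable {R : Type*} [CommSemiring R]

def oddEvenGF (N : ℕ) (x y : R) : R :=
  ∑ l ∈ distinctPartsLE N, x ^ Osum l * y ^ Esum l

lemma oddEvenGF_zero (x y : R) : oddEvenGF 0 x y = 1 := by
  simp [oddEvenGF, distinctPartsLE, Osum, Esum, sumAlt]

lemma oddEvenGF_succ (N : ℕ) (x y : R) :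
    oddEvenGF (N + 1) x y = oddEvenGF N x y + x ^ (N + 1) * oddEvenGF N y x := by
  have hdisj : Disjoint (distinctPartsLE N) ((distinctPartsLE N).image ((N + 1) :: ·)) := by
    refine disjoint_left.mpr fun l hl hl' => ?_
    obtain ⟨l, -, rfl⟩ := mem_image.mp hl'
    have := (mem_distinctPartsLE.mp hl).2 (N + 1) List.mem_cons_self
    omega
  rw [oddEvenGF, distinctPartsLE, sum_union hdisj,
    sum_image fun _ _ _ _ h => List.cons_injective h, oddEvenGF, oddEvenGF, mul_sum]
  congr 1
  refine sum_congr rfl fun l _ => ?_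
  rw [Osum_cons, Esum_cons, pow_add]
  ring

lemma oddEvenGF_add_two (N : ℕ) (x y : R) :
    oddEvenGF (N + 2) x y =
      (1 + x ^ (N + 2) * y ^ (N + 1)) * oddEvenGF N x y +
        x ^ (N + 1) * (1 + x) * oddEvenGF N y x := by
  rw [oddEvenGF_succ, oddEvenGF_succ, oddEvenGF_succ]
  ring

end CommSemiring

lemma oddEvenGF_two_mul_neg_one {R : Type*} [CommRing R] (M : ℕ) (y : R) :
    oddEvenGF (2 * M) (-1) y = ∏ i ∈ range M, (1 + y ^ (2 * i + 1)) ∧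
      oddEvenGF (2 * M) y (-1) = ∏ i ∈ range M, (1 + y ^ (2 * i + 1)) := by
  induction M with
  | zero => simp [oddEvenGF_zero]
  | succ M ih =>
    rw [mul_add_one, oddEvenGF_add_two, oddEvenGF_add_two, ih.1, ih.2, prod_range_succ]
    have hodd : Odd (2 * M + 1) := odd_two_mul_add_one M
    have heven : Even (2 * M + 2) := ⟨M + 1, by ring⟩
    constructor
    · rw [hodd.neg_one_pow, heven.neg_one_pow]
      ring
    · rw [hodd.neg_one_pow]
      ring

lemma oddEvenGF_two_mul_add_one_neg_one {R : Type*} [CommRing R] (M : ℕ) (y : R) :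
    oddEvenGF (2 * M + 1) (-1) y = 0 := by
  rw [oddEvenGF_succ, (oddEvenGF_two_mul_neg_one M y).1, (oddEvenGF_two_mul_neg_one M y).2,
    (odd_two_mul_add_one M).neg_one_pow]
  ring

/-- In `ℤ[q]`: `∑_{π ∈ D_{≤N}} (−1)^{O(π)} q^{E(π)}` equals `∏_{i=0}^{N/2−1} (1 + q^{2i+1})`
when `N` is even, and `0` when `N` is odd. -/
theorem signed_odd_even_gf (N : ℕ) :
    ∑ᶠ l ∈ {l : List ℕ | IsDistinctPartition l ∧ ∀ x ∈ l, x ≤ N},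
      ((-1 : Polynomial ℤ)) ^ Osum l * Polynomial.X ^ Esum l
    = if N % 2 = 0 then ∏ i ∈ Finset.range (N / 2), (1 + Polynomial.X ^ (2 * i + 1))
      else 0 := by
  have hset : {l : List ℕ | IsDistinctPartition l ∧ ∀ x ∈ l, x ≤ N} = ↑(distinctPartsLE N) :=
    Set.ext fun _ => mem_distinctPartsLE.symm
  rw [hset, finsum_mem_coe_finset]
  change oddEvenGF N (-1) X = _
  obtain ⟨M, rfl | rfl⟩ := N.even_or_odd'
  · simpa using (oddEvenGF_two_mul_neg_one M X).1
  · simpa using oddEvenGF_two_mul_add_one_neg_one M X
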